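/- For every m ≥ 2 and k ≥ 2, the k-DNF set D^k_m is unsatisfiable: no truth assignment satisfies all of its formulas. -/
import Mathlib


namespace PaperKDNF

/-- A literal: a propositional variable together with a polarity
(`true` means the variable occurs unnegated). -/
abbrev Lit (V : Type) := V × Bool

/-- A term: a conjunction of literals, represented as a finite set of literals.
The empty term is the constant true. -/
abbrev Trm (V : Type) := Finset (Lit V)

/-- A DNF formula: a disjunction of terms, represented as a finite set of terms. -/
abbrev DNF (V : Type) := Finset (Trm V)

/-- A DNF set: a finite set of DNF formulas, interpreted as their conjunction. -/
abbrev DNFSet (V : Type) := Finset (DNF V)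

/-- Evaluation of a literal under a truth assignment. -/
def litEval {V : Type} (α : V → Bool) (l : Lit V) : Bool :=
  if l.2 then α l.1 else !(α l.1)

/-- A term is satisfied iff all its literals are true. -/
def trmSat {V : Type} (α : V → Bool) (t : Trm V) : Prop :=
  ∀ l ∈ t, litEval α l = true

/-- A DNF formula is satisfied iff some term in it is satisfied. -/
def dnfSat {V : Type} (α : V → Bool) (F : DNF V) : Prop :=
  ∃ t ∈ F, trmSat α t

/-- A DNF set is satisfied iff every formula in it is satisfied. -/
def setSat {V : Type} (α : V → Bool) (D : DNFSet V) : Prop :=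
  ∀ F ∈ D, dnfSat α F

/-- A DNF set is satisfiable iff some truth assignment satisfies it. -/
def Satisfiable {V : Type} (D : DNFSet V) : Prop :=
  ∃ α : V → Bool, setSat α D

/-- A `k`-DNF formula: all terms have at most `k` literals. -/
def IsKDNF {V : Type} (k : ℕ) (F : DNF V) : Prop :=
  ∀ t ∈ F, t.card ≤ k

/-- A `k`-DNF set: a finite set of `k`-DNF formulas. -/
def IsKDNFSet {V : Type} (k : ℕ) (D : DNFSet V) : Prop :=
  ∀ F ∈ D, IsKDNF k F

/-- The variables occurring in a term. -/
def trmVars {V : Type} [DecidableEq V] (t : Trm V) : Finset V :=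
  t.image Prod.fst

/-- The variables occurring in a DNF formula. -/
def dnfVars {V : Type} [DecidableEq V] (F : DNF V) : Finset V :=
  F.biUnion trmVars

/-- The variables occurring in a DNF set. -/
def setVars {V : Type} [DecidableEq V] (D : DNFSet V) : Finset V :=
  D.biUnion dnfVars

/-- The DNF set obtained from `D` by replacing the term `t` of the formula `F ∈ D`
by the term `t'`. -/
def weaken {V : Type} [DecidableEq V] (D : DNFSet V) (F : DNF V) (t t' : Trm V) :
    DNFSet V :=
  insert (insert t' (F.erase t)) (D.erase F)

/-- A DNF set is minimally unsatisfiable iff it is unsatisfiable and replacing any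
single term `t` appearing in a formula `F` of the set by any proper subterm `t'` of
`t` (obtained by deleting at least one literal; the empty term is the constant true)
yields a satisfiable set. -/
def MinUnsat {V : Type} [DecidableEq V] (D : DNFSet V) : Prop :=
  ¬ Satisfiable D ∧
    ∀ F ∈ D, ∀ t ∈ F, ∀ t' ⊂ t, Satisfiable (weaken D F t t')

/-- Indices of the `j`-th block `X_j = {x_{(j-1)(k-1)+1}, …, x_{j(k-1)}}` (1-based). -/
def blockX (k j : ℕ) : Finset ℕ := Finset.Ioc ((j-1)*(k-1)) (j*(k-1))

/-- The term `⋀_{i ∈ B} ¬x_i`. -/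
def negBlockTerm {V : Type} [DecidableEq V] (xv : ℕ → V) (B : Finset ℕ) : Trm V :=
  B.image (fun i => (xv i, false))

/-- The term `⋀_{i' ∈ B, i' ≠ i} ¬x_{i'}`. -/
def almostNegTerm {V : Type} [DecidableEq V] (xv : ℕ → V) (B : Finset ℕ) (i : ℕ) :
    Trm V :=
  (B.erase i).image (fun i' => (xv i', false))

/-- Formulas (i)–(ii) of `W_m`: `¬u_j ∨ (u_{j-1} ∧ ⋀_{x ∈ X_j} ¬x)` for
`1 ≤ j ≤ m-1` (for `j = 1` the conjunct `u_{j-1}` is absent). -/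
def Wu {V : Type} [DecidableEq V] (k : ℕ) (xv uv : ℕ → V) (j : ℕ) : DNF V :=
  { {(uv j, false)},
    (if j = 1 then (∅ : Trm V) else {(uv (j-1), true)}) ∪ negBlockTerm xv (blockX k j) }

/-- Formulas (iii)–(iv) of `W_m`:
`¬v_j ∨ u_j ∨ (v_{j-1} ∧ ⋀_{x ∈ X_j} ¬x) ∨ ⋁_{x ∈ X_j} (u_{j-1} ∧ ⋀_{x' ∈ X_j, x' ≠ x} ¬x')`
for `1 ≤ j ≤ m-1` (for `j = 1` the term containing `v_{j-1}` and the conjuncts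
`u_{j-1}` are absent). -/
def Wv {V : Type} [DecidableEq V] (k : ℕ) (xv uv vv : ℕ → V) (j : ℕ) : DNF V :=
  ({ {(vv j, false)}, {(uv j, true)} } : DNF V) ∪
  (if j = 1 then (∅ : DNF V)
    else {insert (vv (j-1), true) (negBlockTerm xv (blockX k j))}) ∪
  (blockX k j).image (fun i =>
    (if j = 1 then (∅ : Trm V) else {(uv (j-1), true)}) ∪ almostNegTerm xv (blockX k j) i)

/-- Formula (v) of `W_m`:
`(v_{m-1} ∧ ⋀_{x ∈ X_m} ¬x) ∨ ⋁_{x ∈ X_m} (u_{m-1} ∧ ⋀_{x' ∈ X_m, x' ≠ x} ¬x')`. -/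
def Wlast {V : Type} [DecidableEq V] (m k : ℕ) (xv uv vv : ℕ → V) : DNF V :=
  insert (insert (vv (m-1), true) (negBlockTerm xv (blockX k m)))
    ((blockX k m).image (fun i =>
      insert (uv (m-1), true) (almostNegTerm xv (blockX k m) i)))

/-- The `k`-DNF set `W_m`, over the `x`-variables `xv 1, …, xv (m(k-1))` and the
auxiliary variables `uv 1, …, uv (m-1)` and `vv 1, …, vv (m-1)`. -/
def Wset {V : Type} [DecidableEq V] (m k : ℕ) (xv uv vv : ℕ → V) : DNFSet V :=
  (Finset.Icc 1 (m-1)).image (Wu k xv uv) ∪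
  (Finset.Icc 1 (m-1)).image (Wv k xv uv vv) ∪
  {Wlast m k xv uv vv}

/-- The variables of the set `D^k_m`. -/
inductive DVar (k : ℕ) where
  | x : ℕ → ℕ → DVar k                 -- `x^j_i`
  | xu : ℕ → ℕ → DVar k                -- auxiliary `u`-variable of the copy `W^j_m`
  | xv : ℕ → ℕ → DVar k                -- auxiliary `v`-variable of the copy `W^j_m`
  | y : ℕ → (Fin (k-1) → ℕ) → DVar k   -- `y^ν_{i_1,…,i_{k-1}}`
  | u : ℕ → DVar k                     -- `u_ν`
deriving DecidableEq

/-- All tuples `(i_1, …, i_{k-1}) ∈ [m(k-1)]^{k-1}`. -/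
def tuples (m k : ℕ) : Finset (Fin (k-1) → ℕ) :=
  Fintype.piFinset (fun _ => Finset.Icc 1 (m*(k-1)))

/-- The term `x^1_{i_1} ∧ ⋯ ∧ x^{k-1}_{i_{k-1}}`. -/
def xTerm (k : ℕ) (t : Fin (k-1) → ℕ) : Trm (DVar k) :=
  (Finset.univ : Finset (Fin (k-1))).image (fun j => (DVar.x (j.1+1) (t j), true))

/-- Formula (b) of `D^k_m`:
`⋁_{(i_1,…,i_{k-1}) ∈ [m(k-1)]^{k-1}} (x^1_{i_1} ∧ ⋯ ∧ x^{k-1}_{i_{k-1}} ∧ y^ν_{i_1,…,i_{k-1}})`. -/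
def Dpos (m k : ℕ) (ν : ℕ) : DNF (DVar k) :=
  (tuples m k).image (fun t => insert (DVar.y ν t, true) (xTerm k t))

/-- Formula (c) of `D^k_m`:
`¬u_ν ∨ ⋁_{(i_1,…,i_{k-1}) ∈ [m(k-1)]^{k-1}} (x^1_{i_1} ∧ ⋯ ∧ x^{k-1}_{i_{k-1}} ∧ ¬y^ν_{i_1,…,i_{k-1}})`. -/
def Dneg (m k : ℕ) (ν : ℕ) : DNF (DVar k) :=
  insert {(DVar.u ν, false)}
    ((tuples m k).image (fun t => insert (DVar.y ν t, false) (xTerm k t)))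

/-- Formula (d) of `D^k_m`: the clause `u_1 ∨ u_2 ∨ ⋯ ∨ u_{m(k-1)}`. -/
def Dlast (m k : ℕ) : DNF (DVar k) :=
  (Finset.Icc 1 (m*(k-1))).image (fun ν => ({(DVar.u ν, true)} : Trm (DVar k)))

/-- The `k`-DNF set `D^k_m`: the `k-1` disjoint copies `W^j_m(x^j)` of the weight
constraint set together with the formulas (b), (c) and (d). -/
def Dset (m k : ℕ) : DNFSet (DVar k) :=
  (Finset.Icc 1 (k-1)).biUnion
      (fun j => Wset m k (DVar.x j) (DVar.xu j) (DVar.xv j)) ∪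
  (Finset.Icc 1 (m*(k-1))).image (Dpos m k) ∪
  (Finset.Icc 1 (m*(k-1))).image (Dneg m k) ∪
  {Dlast m k}

section Proof

variable {V : Type} [DecidableEq V]

/-- "At most one of `xv 1, …, xv n` is true". -/
def AMO (α : V → Bool) (xv : ℕ → V) (n : ℕ) : Prop :=
  ∀ i₁ ∈ Finset.Icc 1 n, ∀ i₂ ∈ Finset.Icc 1 n,
    α (xv i₁) = true → α (xv i₂) = true → i₁ = i₂

variable {α : V → Bool} {xv uv vv : ℕ → V}

lemma negBlock_false {B : Finset ℕ} (h : trmSat α (negBlockTerm xv B))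
    {i : ℕ} (hi : i ∈ B) : α (xv i) = false := by
  have := h (xv i, false) (Finset.mem_image_of_mem _ hi)
  simpa [litEval] using this

lemma almostNeg_false {B : Finset ℕ} {c : ℕ}
    (h : trmSat α (almostNegTerm xv B c)) {i : ℕ} (hi : i ∈ B) (hne : i ≠ c) :
    α (xv i) = false := by
  have := h (xv i, false)
    (Finset.mem_image_of_mem _ (Finset.mem_erase.2 ⟨hne, hi⟩))
  simpa [litEval] using this

lemma trmSat_union {s t : Trm V} (h : trmSat α (s ∪ t)) :
    trmSat α s ∧ trmSat α t :=
  ⟨fun l hl => h l (Finset.mem_union_left _ hl),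
   fun l hl => h l (Finset.mem_union_right _ hl)⟩

lemma trmSat_insert {l : Lit V} {t : Trm V} (h : trmSat α (insert l t)) :
    litEval α l = true ∧ trmSat α t :=
  ⟨h l (Finset.mem_insert_self _ _), fun l' hl' => h l' (Finset.mem_insert_of_mem hl')⟩

lemma sat_singleton_true {v : V} (h : trmSat α ({(v, true)} : Trm V)) :
    α v = true := by
  simpa [litEval] using h (v, true) (Finset.mem_singleton_self _)

lemma sat_singleton_false {v : V} (h : trmSat α ({(v, false)} : Trm V)) :
    α v = false := by
  simpa [litEval] using h (v, false) (Finset.mem_singleton_self _)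

lemma amo_of_allFalse {n : ℕ} (h : ∀ i ∈ Finset.Icc 1 n, α (xv i) = false) :
    AMO α xv n := by
  intro i₁ h₁ i₂ h₂ ht₁ _
  rw [h i₁ h₁] at ht₁; cases ht₁

lemma amo_extend {a b : ℕ} (hab : a ≤ b) (h1 : AMO α xv a)
    (h2 : ∀ i, a < i → i ≤ b → α (xv i) = false) : AMO α xv b := by
  intro i₁ h₁ i₂ h₂ ht₁ ht₂
  simp only [Finset.mem_Icc] at h₁ h₂
  have k1 : i₁ ≤ a := by
    by_contra hc
    rw [h2 i₁ (by omega) h₁.2] at ht₁; cases ht₁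
  have k2 : i₂ ≤ a := by
    by_contra hc
    rw [h2 i₂ (by omega) h₂.2] at ht₂; cases ht₂
  exact h1 i₁ (Finset.mem_Icc.2 ⟨h₁.1, k1⟩) i₂ (Finset.mem_Icc.2 ⟨h₂.1, k2⟩) ht₁ ht₂

lemma amo_of_except {a b c : ℕ}
    (h1 : ∀ i ∈ Finset.Icc 1 a, α (xv i) = false)
    (h2 : ∀ i, a < i → i ≤ b → i ≠ c → α (xv i) = false) : AMO α xv b := by
  intro i₁ h₁ i₂ h₂ ht₁ ht₂
  simp only [Finset.mem_Icc] at h₁ h₂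
  have k1 : i₁ = c := by
    by_contra hc
    rcases le_or_gt i₁ a with h | h
    · rw [h1 i₁ (Finset.mem_Icc.2 ⟨h₁.1, h⟩)] at ht₁; cases ht₁
    · rw [h2 i₁ h h₁.2 hc] at ht₁; cases ht₁
  have k2 : i₂ = c := by
    by_contra hc
    rcases le_or_gt i₂ a with h | h
    · rw [h1 i₂ (Finset.mem_Icc.2 ⟨h₂.1, h⟩)] at ht₂; cases ht₂
    · rw [h2 i₂ h h₂.2 hc] at ht₂; cases ht₂
  rw [k1, k2]

lemma mem_blockX {k j i : ℕ} : i ∈ blockX k j ↔ (j-1)*(k-1) < i ∧ i ≤ j*(k-1) := by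
  simp [blockX]

lemma Wu_mem {m k j : ℕ} (hj : 1 ≤ j) (hj' : j ≤ m - 1) :
    Wu k xv uv j ∈ Wset m k xv uv vv := by
  simp only [Wset, Finset.mem_union, Finset.mem_image]
  exact Or.inl (Or.inl ⟨j, Finset.mem_Icc.2 ⟨hj, hj'⟩, rfl⟩)

lemma Wv_mem {m k j : ℕ} (hj : 1 ≤ j) (hj' : j ≤ m - 1) :
    Wv k xv uv vv j ∈ Wset m k xv uv vv := by
  simp only [Wset, Finset.mem_union, Finset.mem_image]
  exact Or.inl (Or.inr ⟨j, Finset.mem_Icc.2 ⟨hj, hj'⟩, rfl⟩)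

lemma Wlast_mem {m k : ℕ} : Wlast m k xv uv vv ∈ Wset m k xv uv vv := by
  simp [Wset]

/-- Key property of `W_m`: any satisfying assignment makes at most one
`x`-variable true. -/
lemma Wsat_key {m k : ℕ} (hm : 2 ≤ m) (hk : 2 ≤ k)
    (hs : setSat α (Wset m k xv uv vv)) : AMO α xv (m*(k-1)) := by
  -- Claim P: if uv j is true then all x-variables in blocks 1..j are false
  have P : ∀ j, 1 ≤ j → j ≤ m - 1 → α (uv j) = true →
      ∀ i ∈ Finset.Icc 1 (j*(k-1)), α (xv i) = false := by
    intro j hj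
    induction j, hj using Nat.le_induction with
    | base =>
      intro _ hu i hi
      obtain ⟨t, ht, hts⟩ := hs _ (Wu_mem (m := m) le_rfl (by omega))
      simp only [Wu, Finset.mem_insert, Finset.mem_singleton, eq_self_iff_true,
        if_true, Finset.empty_union] at ht
      rcases ht with rfl | rfl
      · rw [sat_singleton_false hts] at hu; cases hu
      · exact negBlock_false hts (by
          simp only [mem_blockX]
          simp only [Finset.mem_Icc] at hi
          omega)
    | succ n hn ih =>
      intro hle hu i hi
      obtain ⟨t, ht, hts⟩ := hs _ (Wu_mem (m := m) (by omega) hle)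
      simp only [Wu, Finset.mem_insert, Finset.mem_singleton,
        if_neg (show ¬(n+1 = 1) by omega), Nat.add_sub_cancel] at ht
      rcases ht with rfl | rfl
      · rw [sat_singleton_false hts] at hu; cases hu
      · obtain ⟨h1, h2⟩ := trmSat_union hts
        have hun : α (uv n) = true := sat_singleton_true h1
        have hmul : (n+1)*(k-1) = n*(k-1) + (k-1) := by ring
        simp only [Finset.mem_Icc] at hi
        rcases le_or_gt i (n*(k-1)) with h | h
        · exact ih (by omega) hun i (Finset.mem_Icc.2 ⟨hi.1, h⟩)
        · exact negBlock_false h2 (by simp only [mem_blockX, Nat.add_sub_cancel]; omega)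
  -- Claim Q: if vv j is true then at most one x-variable in blocks 1..j is true
  have Q : ∀ j, 1 ≤ j → j ≤ m - 1 → α (vv j) = true → AMO α xv (j*(k-1)) := by
    intro j hj
    induction j, hj using Nat.le_induction with
    | base =>
      intro _ hv
      obtain ⟨t, ht, hts⟩ := hs _ (Wv_mem (m := m) le_rfl (by omega))
      simp only [Wv, eq_self_iff_true, if_true, Finset.empty_union,
        Finset.union_empty, Finset.mem_union, Finset.mem_insert,
        Finset.mem_singleton, Finset.mem_image] at ht
      rcases ht with (rfl | rfl) | ⟨c, hc, rfl⟩
      · rw [sat_singleton_false hts] at hv; cases hv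
      · exact amo_of_allFalse (P 1 le_rfl (by omega) (sat_singleton_true hts))
      · refine amo_of_except (a := 0) (c := c) (by simp) ?_
        intro i hi1 hi2 hne
        exact almostNeg_false hts (by simp only [mem_blockX]; omega) hne
    | succ n hn ih =>
      intro hle hv
      obtain ⟨t, ht, hts⟩ := hs _ (Wv_mem (m := m) (by omega) hle)
      simp only [Wv, if_neg (show ¬(n+1 = 1) by omega), Nat.add_sub_cancel,
        Finset.mem_union, Finset.mem_insert, Finset.mem_singleton,
        Finset.mem_image] at ht
      have hmul : (n+1)*(k-1) = n*(k-1) + (k-1) := by ring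
      rcases ht with ((rfl | rfl) | rfl) | ⟨c, hc, rfl⟩
      · rw [sat_singleton_false hts] at hv; cases hv
      · exact amo_of_allFalse (P (n+1) (by omega) hle (sat_singleton_true hts))
      · obtain ⟨h1, h2⟩ := trmSat_insert hts
        have hvn : α (vv n) = true := by simpa [litEval] using h1
        refine amo_extend (by omega) (ih (by omega) hvn) ?_
        intro i hi1 hi2
        exact negBlock_false h2 (by simp only [mem_blockX, Nat.add_sub_cancel]; omega)
      · obtain ⟨h1, h2⟩ := trmSat_union hts
        have hun : α (uv n) = true := sat_singleton_true h1
        refine amo_of_except (c := c) (P n (by omega) (by omega) hun) ?_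
        intro i hi1 hi2 hne
        exact almostNeg_false h2 (by simp only [mem_blockX, Nat.add_sub_cancel]; omega) hne
  -- Conclude using the last formula
  obtain ⟨t, ht, hts⟩ := hs _ (Wlast_mem (m := m) (k := k))
  have hmul : m*(k-1) = (m-1)*(k-1) + (k-1) := by
    cases m with
    | zero => omega
    | succ m' => simp [Nat.succ_sub_one, Nat.succ_mul]
  simp only [Wlast, Finset.mem_insert, Finset.mem_image] at ht
  rcases ht with rfl | ⟨c, hc, rfl⟩
  · obtain ⟨h1, h2⟩ := trmSat_insert hts
    have hvm : α (vv (m-1)) = true := by simpa [litEval] using h1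
    refine amo_extend (by omega) (Q (m-1) (by omega) le_rfl hvm) ?_
    intro i hi1 hi2
    exact negBlock_false h2 (by simp only [mem_blockX]; omega)
  · obtain ⟨h1, h2⟩ := trmSat_insert hts
    have hum : α (uv (m-1)) = true := by simpa [litEval] using h1
    refine amo_of_except (c := c) (P (m-1) (by omega) le_rfl hum) ?_
    intro i hi1 hi2 hne
    exact almostNeg_false h2 (by simp only [mem_blockX]; omega) hne

end Proof

/-- For every `m ≥ 2` and `k ≥ 2`, the `k`-DNF set `D^k_m` is
unsatisfiable: no truth assignment satisfies all of its formulas. -/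
theorem Dset_unsatisfiable (m k : ℕ) (hm : 2 ≤ m) (hk : 2 ≤ k) :
    ¬ Satisfiable (Dset m k) := by
  intro ⟨a, hsat⟩
  have hk1 : 1 ≤ k - 1 := by omega
  -- at-most-one for each copy
  have hAMO : ∀ j, 1 ≤ j → j ≤ k - 1 → AMO a (DVar.x j) (m*(k-1)) := by
    intro j hj hj'
    refine Wsat_key (uv := DVar.xu j) (vv := DVar.xv j) hm hk ?_
    intro F hF
    refine hsat F ?_
    simp only [Dset, Finset.mem_union, Finset.mem_biUnion, Finset.mem_singleton]
    exact Or.inl (Or.inl (Or.inl ⟨j, Finset.mem_Icc.2 ⟨hj, hj'⟩, hF⟩))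
  -- some u_ν is true
  obtain ⟨t, ht, hts⟩ := hsat (Dlast m k) (by simp [Dset])
  simp only [Dlast, Finset.mem_image] at ht
  obtain ⟨ν, hν, rfl⟩ := ht
  have hu : a (DVar.u ν) = true := sat_singleton_true hts
  -- the positive formula for ν
  obtain ⟨t, ht, hts⟩ := hsat (Dpos m k ν) (by
    simp only [Dset, Finset.mem_union, Finset.mem_image]
    exact Or.inl (Or.inl (Or.inr ⟨ν, hν, rfl⟩)))
  simp only [Dpos, Finset.mem_image] at ht
  obtain ⟨tp, htp, rfl⟩ := ht
  obtain ⟨hy, hxp⟩ := trmSat_insert hts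
  have hyp : a (DVar.y ν tp) = true := by simpa [litEval] using hy
  -- the negative formula for ν
  obtain ⟨t, ht, hts⟩ := hsat (Dneg m k ν) (by
    simp only [Dset, Finset.mem_union, Finset.mem_image]
    exact Or.inl (Or.inr ⟨ν, hν, rfl⟩))
  simp only [Dneg, Finset.mem_insert, Finset.mem_image] at ht
  rcases ht with rfl | ⟨tn, htn, rfl⟩
  · rw [sat_singleton_false hts] at hu; cases hu
  obtain ⟨hy', hxn⟩ := trmSat_insert hts
  have hyn : a (DVar.y ν tn) = false := by simpa [litEval] using hy'
  -- the two tuples agree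
  have hxval : ∀ (tu : Fin (k-1) → ℕ), trmSat a (xTerm k tu) →
      ∀ j : Fin (k-1), a (DVar.x (j.1+1) (tu j)) = true := by
    intro tu htu j
    have := htu (DVar.x (j.1+1) (tu j), true)
      (Finset.mem_image_of_mem _ (Finset.mem_univ j))
    simpa [litEval] using this
  have heq : tp = tn := by
    funext j
    have h1 := (Fintype.mem_piFinset.mp htp) j
    have h2 := (Fintype.mem_piFinset.mp htn) j
    exact hAMO (j.1+1) (by omega) (by omega) (tp j) h1 (tn j) h2
      (hxval tp hxp j) (hxval tn hxn j)
  rw [heq, hyn] at hyp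
  cases hyp

end PaperKDNF
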